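/- For c > 0, the function y ↦ arctan(y)·c + λ·y/(1+y²) (λ real) evaluated along the constraint equation arctan(y)·c = -λ·y/(1+y²) with y = e^{a} yields: a > 0 iff λ < -(π/2)c, a = 0 iff λ = -(π/2)c, and a < 0 iff -(π/2)c < λ < -c, where a is the unique solution parameter. -/

import Mathlib

/-!
Multiplying the constraint by `(1 + y²) / y` with `y = exp a` turns it into `-λ = c · g y`, where
`g y = (y⁻¹ + y) · arctan y` is strictly increasing on `(0, ∞)` with `g 1 = π / 2`. Hence the sign
of `a`, i.e. the position of `y` relative to `1`, is the position of `-λ / c` relative to `π / 2`.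
-/

open Real Set

lemma arctan_lt_self {x : ℝ} (hx : 0 < x) : arctan x < x := by
  simpa [tan_arctan] using lt_tan (arctan_pos.2 hx) (arctan_lt_pi_div_two x)

lemma sq_sub_one_mul_arctan_add_self_pos {x : ℝ} (hx : 0 < x) :
    0 < (x ^ 2 - 1) * arctan x + x := by
  rcases le_or_gt 1 x with h | h
  · have : 0 ≤ (x ^ 2 - 1) * arctan x := mul_nonneg (by nlinarith) (arctan_nonneg.2 hx.le)
    linarith
  · have hneg : x ^ 2 - 1 < 0 := by nlinarith
    nlinarith [mul_lt_mul_of_neg_left (arctan_lt_self hx) hneg, pow_pos hx 3]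

lemma hasDerivAt_inv_add_self_mul_arctan {x : ℝ} (hx : x ≠ 0) :
    HasDerivAt (fun y => (y⁻¹ + y) * arctan y) (((x ^ 2 - 1) * arctan x + x) / x ^ 2) x := by
  refine (((hasDerivAt_inv hx).add (hasDerivAt_id' x)).mul (hasDerivAt_arctan x)).congr_deriv ?_
  simp only [Pi.add_apply]
  field_simp
  ring

lemma strictMonoOn_inv_add_self_mul_arctan :
    StrictMonoOn (fun y => (y⁻¹ + y) * arctan y) (Ioi 0) := by
  refine strictMonoOn_of_hasDerivWithinAt_pos (f' := fun x => ((x ^ 2 - 1) * arctan x + x) / x ^ 2)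
    (convex_Ioi 0) ?_ (fun x hx => ?_) (fun x hx => ?_)
  · exact ((continuousOn_inv₀.mono fun _ hx => ne_of_gt hx).add continuousOn_id).mul
      continuous_arctan.continuousOn
  · rw [interior_Ioi] at hx ⊢
    exact (hasDerivAt_inv_add_self_mul_arctan (ne_of_gt hx)).hasDerivWithinAt
  · rw [interior_Ioi] at hx
    exact div_pos (sq_sub_one_mul_arctan_add_self_pos hx) (pow_pos hx 2)

theorem stmt_19 (c lam : ℝ) (hc : 0 < c) (hlam : lam < -c) (a : ℝ)
    (ha : c * arctan (exp a) = -lam * exp a / (1 + exp a ^ 2)) :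
    (0 < a ↔ lam < -(π / 2) * c) ∧
    (a = 0 ↔ lam = -(π / 2) * c) ∧
    (a < 0 ↔ (-(π / 2) * c < lam ∧ lam < -c)) := by
  set g : ℝ → ℝ := fun y => (y⁻¹ + y) * arctan y
  have hmono : StrictMonoOn g (Ioi 0) := strictMonoOn_inv_add_self_mul_arctan
  have hlam_eq : lam = -g (exp a) * c := by
    have := exp_pos a
    simp only [g]
    field_simp at ha ⊢
    linarith
  have hg_one : g 1 = π / 2 := by
    simp only [g, arctan_one]
    ring
  have hone : (1 : ℝ) ∈ Ioi 0 := mem_Ioi.2 one_pos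
  have hexp : exp a ∈ Ioi 0 := exp_pos a
  refine ⟨?_, ?_, ?_⟩
  · rw [← one_lt_exp_iff, ← hmono.lt_iff_lt hone hexp, hg_one, hlam_eq, neg_mul, neg_mul,
      neg_lt_neg_iff, mul_lt_mul_iff_left₀ hc]
  · rw [← exp_eq_one_iff, ← hmono.injOn.eq_iff hexp hone, hg_one, hlam_eq,
      mul_left_inj' hc.ne', neg_inj]
  · rw [and_iff_left hlam, ← exp_lt_one_iff, ← hmono.lt_iff_lt hexp hone, hg_one, hlam_eq,
      neg_mul, neg_mul, neg_lt_neg_iff, mul_lt_mul_iff_left₀ hc]
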